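/- arXiv:1604.03654 — 3 statements merged into one kernel-verified Lean document; each statement's English description precedes it below -/
import Mathlib

section
/- For all integers a ≥ 0, b ≥ 1, and j with 0 ≤ j ≤ a, we have (6 · C(a,j) · (j+5)! · (a+b-j)!) / (a+b+6)! ≤ (6/(a+b+6)) · ((j+5)/(a+b+5))^5 · ((a-j+b)/(a+b))^b. -/
open Finset

lemma fact_ratio (n k : ℕ) :
    (Nat.factorial (n + k) : ℝ) = (Nat.factorial n : ℝ) * ∏ i ∈ range k, ((n : ℝ) + 1 + i) := by
  induction k with
  | zero => simp
  | succ k ih =>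
      rw [prod_range_succ, ← mul_assoc, ← ih, show n + (k + 1) = (n + k) + 1 from rfl,
        Nat.factorial_succ]
      push_cast
      ring

set_option maxHeartbeats 1000000 in
/-- upper bound on the probability term in the RIC analysis. -/
theorem stmt_1 (a b j : ℕ) (hb : 1 ≤ b) (hj : j ≤ a) :
    (6 * (a.choose j : ℝ) * (Nat.factorial (j + 5)) * (Nat.factorial (a + b - j))) /
      (Nat.factorial (a + b + 6)) ≤
    (6 / ((a : ℝ) + b + 6)) * (((j : ℝ) + 5) / ((a : ℝ) + b + 5)) ^ 5 *
      ((((a : ℝ) - j + b) / ((a : ℝ) + b)) ^ b) := by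
  have hJA : (j : ℝ) ≤ (a : ℝ) := Nat.cast_le.mpr hj
  have hB1 : (1 : ℝ) ≤ (b : ℝ) := by exact_mod_cast hb
  have hJ0 : (0 : ℝ) ≤ (j : ℝ) := by positivity
  have hA0 : (0 : ℝ) ≤ (a : ℝ) := by positivity
  have hAJ0 : (0 : ℝ) ≤ (a : ℝ) - (j : ℝ) := by linarith
  have hD : ((a - j : ℕ) : ℝ) = (a : ℝ) - (j : ℝ) := by
    push_cast [Nat.cast_sub hj]; ring
  -- factorial expansions
  have h1 : (Nat.factorial (j + 5) : ℝ)
      = (Nat.factorial j : ℝ) * ∏ i ∈ range 5, ((j : ℝ) + 1 + i) := fact_ratio j 5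
  have h2 : (Nat.factorial (a + b - j) : ℝ)
      = (Nat.factorial (a - j) : ℝ) * ∏ i ∈ range b, (((a : ℝ) - (j : ℝ)) + 1 + i) := by
    rw [show a + b - j = (a - j) + b by omega, fact_ratio, hD]
  have h3 : (Nat.factorial (a + b + 6) : ℝ)
      = (Nat.factorial a : ℝ) * ∏ i ∈ range (b + 6), ((a : ℝ) + 1 + i) := by
    rw [show a + b + 6 = a + (b + 6) by ring, fact_ratio]
  have hC : (a.choose j : ℝ)
      = (Nat.factorial a : ℝ) / ((Nat.factorial j : ℝ) * (Nat.factorial (a - j) : ℝ)) :=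
    Nat.cast_choose ℝ hj
  -- split the big denominator product
  have hsplit : ∏ i ∈ range (b + 6), ((a : ℝ) + 1 + i)
      = (∏ i ∈ range b, ((a : ℝ) + 1 + i)) *
        ((∏ i ∈ range 5, ((a : ℝ) + (b : ℝ) + 1 + i)) * ((a : ℝ) + (b : ℝ) + 6)) := by
    rw [prod_range_add]
    congr 1
    rw [show (6 : ℕ) = 5 + 1 from rfl, prod_range_succ]
    congr 1
    · exact Finset.prod_congr rfl fun i _ => by push_cast; ring
    · push_cast; ring
  -- positivity facts
  have hp1 : (0 : ℝ) < ∏ i ∈ range b, ((a : ℝ) + 1 + i) :=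
    Finset.prod_pos fun i _ => by positivity
  have hp2 : (0 : ℝ) < ∏ i ∈ range 5, ((a : ℝ) + (b : ℝ) + 1 + i) :=
    Finset.prod_pos fun i _ => by positivity
  have hp3 : (0 : ℝ) < (a : ℝ) + (b : ℝ) + 6 := by positivity
  have hfj : (Nat.factorial j : ℝ) ≠ 0 := by positivity
  have hfaj : (Nat.factorial (a - j) : ℝ) ≠ 0 := by positivity
  have hfa : (Nat.factorial a : ℝ) ≠ 0 := by positivity
  -- rewrite LHS as a product of ratios
  have key : (6 * (a.choose j : ℝ) * (Nat.factorial (j + 5)) * (Nat.factorial (a + b - j))) /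
      (Nat.factorial (a + b + 6))
      = (6 / ((a : ℝ) + (b : ℝ) + 6)) *
        (∏ i ∈ range 5, (((j : ℝ) + 1 + i) / ((a : ℝ) + (b : ℝ) + 1 + i)))
        * (∏ i ∈ range b, ((((a : ℝ) - (j : ℝ)) + 1 + i) / ((a : ℝ) + 1 + i))) := by
    rw [h1, h2, h3, hC, hsplit, prod_div_distrib, prod_div_distrib]
    field_simp
  rw [key]
  have hq1 : (∏ i ∈ range 5, (((j : ℝ) + 1 + i) / ((a : ℝ) + (b : ℝ) + 1 + i)))
      ≤ (((j : ℝ) + 5) / ((a : ℝ) + (b : ℝ) + 5)) ^ 5 := by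
    rw [show (((j : ℝ) + 5) / ((a : ℝ) + (b : ℝ) + 5)) ^ 5
        = ∏ _i ∈ range 5, (((j : ℝ) + 5) / ((a : ℝ) + (b : ℝ) + 5)) by
          rw [prod_const, card_range]]
    refine Finset.prod_le_prod (fun i _ => by positivity) (fun i hi => ?_)
    have hi5 : (i : ℝ) ≤ 4 := by
      exact_mod_cast Nat.lt_succ_iff.mp (mem_range.mp hi)
    have hi0 : (0 : ℝ) ≤ (i : ℝ) := by positivity
    rw [div_le_div_iff₀ (by positivity) (by positivity)]
    nlinarith [mul_nonneg hJ0 hi0]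
  have hq2 : (∏ i ∈ range b, ((((a : ℝ) - (j : ℝ)) + 1 + i) / ((a : ℝ) + 1 + i)))
      ≤ (((a : ℝ) - (j : ℝ) + (b : ℝ)) / ((a : ℝ) + (b : ℝ))) ^ b := by
    rw [show (((a : ℝ) - (j : ℝ) + (b : ℝ)) / ((a : ℝ) + (b : ℝ))) ^ b
        = ∏ _i ∈ range b, (((a : ℝ) - (j : ℝ) + (b : ℝ)) / ((a : ℝ) + (b : ℝ))) by
          rw [prod_const, card_range]]
    refine Finset.prod_le_prod (fun i _ => by positivity) (fun i hi => ?_)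
    have hib : (i : ℝ) + 1 ≤ (b : ℝ) := by
      exact_mod_cast Nat.succ_le_of_lt (mem_range.mp hi)
    have hi0 : (0 : ℝ) ≤ (i : ℝ) := by positivity
    rw [div_le_div_iff₀ (by positivity) (by positivity)]
    nlinarith [mul_nonneg hJ0 hi0]
  calc (6 / ((a : ℝ) + (b : ℝ) + 6)) *
        (∏ i ∈ range 5, (((j : ℝ) + 1 + i) / ((a : ℝ) + (b : ℝ) + 1 + i)))
        * (∏ i ∈ range b, ((((a : ℝ) - (j : ℝ)) + 1 + i) / ((a : ℝ) + 1 + i)))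
      ≤ (6 / ((a : ℝ) + (b : ℝ) + 6)) *
        ((((j : ℝ) + 5) / ((a : ℝ) + (b : ℝ) + 5)) ^ 5)
        * (∏ i ∈ range b, ((((a : ℝ) - (j : ℝ)) + 1 + i) / ((a : ℝ) + 1 + i))) := by
        apply mul_le_mul_of_nonneg_right (mul_le_mul_of_nonneg_left hq1 (by positivity))
        exact Finset.prod_nonneg fun i _ => by positivity
    _ ≤ (6 / ((a : ℝ) + (b : ℝ) + 6)) *
        ((((j : ℝ) + 5) / ((a : ℝ) + (b : ℝ) + 5)) ^ 5)
        * ((((a : ℝ) - (j : ℝ) + (b : ℝ)) / ((a : ℝ) + (b : ℝ))) ^ b) := by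
        exact mul_le_mul_of_nonneg_left hq2 (by positivity)
end

section
/- Fix reals a ≥ 0, b ≥ 1 and define φ(x) = (6/(a+b+6)) · ((x+5)/(a+b+5))^5 · exp(-x·b/(a+b)) for x ≥ 0. Then for every integer j ≥ 0 and every real x ∈ [j, j+1], φ(x)/φ(j) ≥ 1/e. -/
/-- ratio bound `φ(x)/φ(j) ≥ 1/e` for `x ∈ [j, j+1]`. -/
theorem stmt_3 (a b : ℝ) (ha : 0 ≤ a) (hb : 1 ≤ b) (φ : ℝ → ℝ)
    (hφ : ∀ x, φ x = 6 / (a + b + 6) * ((x + 5) / (a + b + 5)) ^ 5 *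
      Real.exp (-x * b / (a + b))) :
    ∀ (j : ℕ) (x : ℝ), (j : ℝ) ≤ x → x ≤ (j : ℝ) + 1 →
      φ x / φ (j : ℝ) ≥ 1 / Real.exp 1 := by
  intro j x hjx hxj
  have hjn : (0:ℝ) ≤ (j:ℝ) := Nat.cast_nonneg j
  have hs : (0:ℝ) < a + b := by linarith
  have hφj : 0 < φ (j:ℝ) := by
    rw [hφ]
    have h6 : (0:ℝ) < a + b + 6 := by linarith
    have h5 : (0:ℝ) < a + b + 5 := by linarith
    have hj5 : (0:ℝ) < (j:ℝ) + 5 := by linarith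
    positivity
  rw [ge_iff_le, le_div_iff₀ hφj, hφ, hφ]
  have hexp : 1 / Real.exp 1 = Real.exp (-1) := by
    rw [Real.exp_neg]; ring
  rw [hexp, mul_comm (Real.exp (-1)), mul_assoc, mul_assoc, ← Real.exp_add]
  have h5 : (0:ℝ) < a + b + 5 := by linarith
  have hpow : (((j:ℝ) + 5) / (a + b + 5)) ^ 5 ≤ ((x + 5) / (a + b + 5)) ^ 5 :=
    pow_le_pow_left₀ (by positivity) ((div_le_div_iff_of_pos_right h5).2 (by linarith)) 5
  have hb1 : (x - (j:ℝ)) * b ≤ a + b := by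
    nlinarith [mul_le_mul_of_nonneg_right (show x - (j:ℝ) ≤ 1 by linarith)
      (show (0:ℝ) ≤ b by linarith)]
  have hex : Real.exp (-(j:ℝ) * b / (a + b) + -1) ≤ Real.exp (-x * b / (a + b)) := by
    apply Real.exp_le_exp.2
    rw [div_add' _ _ _ hs.ne', div_le_div_iff₀ hs hs]
    nlinarith [mul_le_mul_of_nonneg_right hb1 hs.le]
  have hC : (0:ℝ) ≤ 6 / (a + b + 6) := by positivity
  rw [mul_assoc]
  exact mul_le_mul_of_nonneg_left
    (mul_le_mul hpow hex (Real.exp_pos _).le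
      (pow_nonneg (div_nonneg (by linarith) h5.le) 5)) hC
end

section
/- For reals a ≥ 0 and b ≥ 1, the sum over j from 0 to ⌊a⌋ of (6/(a+b+6)) · ((j+5)/(a+b+5))^5 · exp(-j·b/(a+b)) is at most e times the integral from 0 to a of (6/(a+b+6)) · ((x+5)/(a+b+5))^5 · exp(-x·b/(a+b)) dx, plus the j = 0 term. -/
open MeasureTheory Finset

/-!
On each unit interval `[j, j + 1]` the function `φ` drops by at most a factor `e`: the
exponential factor only decreases, and `((x + 6) / (x + 5)) ^ 5 ≤ exp (5 / (x + 5)) ≤ e`.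
Hence `φ (j + 1) ≤ e ∫_j^{j+1} φ`, and summing over `j < ⌊a⌋` bounds all terms but `j = 0`.
-/

theorem add_one_pow_le_exp_one_mul_pow {t : ℝ} {n : ℕ} (ht : 0 < t) (hn : (n : ℝ) ≤ t) :
    (t + 1) ^ n ≤ Real.exp 1 * t ^ n := by
  have hstep : t + 1 ≤ t * Real.exp t⁻¹ := by
    calc t + 1 = t * (t⁻¹ + 1) := by field_simp; ring
      _ ≤ t * Real.exp t⁻¹ := by gcongr; exact Real.add_one_le_exp _
  have hexp : Real.exp t⁻¹ ^ n ≤ Real.exp 1 := by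
    rw [← Real.exp_nat_mul, Real.exp_le_exp, ← div_eq_mul_inv, div_le_one ht]
    exact hn
  calc (t + 1) ^ n ≤ (t * Real.exp t⁻¹) ^ n := by gcongr
    _ = Real.exp t⁻¹ ^ n * t ^ n := by ring
    _ ≤ Real.exp 1 * t ^ n := by gcongr

theorem mul_pow_mul_exp_le_exp_one_mul {K μ x y : ℝ} {n : ℕ} (hK : 0 ≤ K) (hμ : 0 ≤ μ)
    (hn : 0 < n) (hx : 0 ≤ x) (hxy : x ≤ y) (hyx : y ≤ x + 1) :
    K * (y + n) ^ n * Real.exp (-(μ * y)) ≤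
      Real.exp 1 * (K * (x + n) ^ n * Real.exp (-(μ * x))) := by
  have hxn : 0 < x + n := by positivity
  have hpow : (y + n) ^ n ≤ Real.exp 1 * (x + n) ^ n := by
    calc (y + n) ^ n ≤ (x + n + 1) ^ n := pow_le_pow_left₀ (by linarith) (by linarith) n
      _ ≤ Real.exp 1 * (x + n) ^ n := add_one_pow_le_exp_one_mul_pow hxn (by linarith)
  have hdecay : Real.exp (-(μ * y)) ≤ Real.exp (-(μ * x)) := by
    gcongr
  calc K * (y + n) ^ n * Real.exp (-(μ * y))
      ≤ K * (Real.exp 1 * (x + n) ^ n) * Real.exp (-(μ * x)) := by gcongr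
    _ = Real.exp 1 * (K * (x + n) ^ n * Real.exp (-(μ * x))) := by ring

theorem sum_range_floor_le_integral {f g : ℝ → ℝ} {a : ℝ} (ha : 0 ≤ a)
    (hg : IntervalIntegrable g volume 0 a) (hg_nonneg : ∀ x ∈ Set.Icc 0 a, 0 ≤ g x)
    (hfg : ∀ (i : ℕ) (x : ℝ), (i : ℝ) ≤ x → x ≤ i + 1 → f (i + 1) ≤ g x) :
    ∑ i ∈ range ⌊a⌋₊, f (i + 1) ≤ ∫ x in (0 : ℝ)..a, g x := by
  have hfloor : (⌊a⌋₊ : ℝ) ≤ a := Nat.floor_le ha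
  have hint : ∀ k < ⌊a⌋₊, IntervalIntegrable g volume (k : ℝ) ((k + 1 : ℕ) : ℝ) := by
    intro k hk
    have hk' : (k : ℝ) + 1 ≤ a := le_trans (by exact_mod_cast hk) hfloor
    refine hg.mono_set (Set.uIcc_subset_uIcc ?_ ?_) <;>
      exact Set.mem_uIcc_of_le (by positivity) (by push_cast; linarith)
  calc ∑ i ∈ range ⌊a⌋₊, f (i + 1)
      ≤ ∑ i ∈ range ⌊a⌋₊, ∫ x in (i : ℝ)..((i + 1 : ℕ) : ℝ), g x := by
        refine sum_le_sum fun i hi => ?_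
        calc f (i + 1) = ∫ _ in (i : ℝ)..((i + 1 : ℕ) : ℝ), f (i + 1) := by simp
          _ ≤ ∫ x in (i : ℝ)..((i + 1 : ℕ) : ℝ), g x :=
            intervalIntegral.integral_mono_on (by simp) intervalIntegrable_const
              (hint i (mem_range.mp hi)) fun x hx => hfg i x hx.1 (by exact_mod_cast hx.2)
    _ = ∫ x in (0 : ℝ)..(⌊a⌋₊ : ℝ), g x := by
        simpa using intervalIntegral.sum_integral_adjacent_intervals hint
    _ ≤ ∫ x in (0 : ℝ)..a, g x := by
        refine intervalIntegral.integral_mono_interval le_rfl (Nat.cast_nonneg _) hfloor ?_ hg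
        filter_upwards [ae_restrict_mem measurableSet_Ioc] with x hx
        exact hg_nonneg x (Set.Ioc_subset_Icc_self hx)

/-- sum-to-integral comparison for the probability sum. -/
theorem stmt_4 (a b : ℝ) (ha : 0 ≤ a) (hb : 1 ≤ b) (φ : ℝ → ℝ)
    (hφ : ∀ x, φ x = 6 / (a + b + 6) * ((x + 5) / (a + b + 5)) ^ 5 *
      Real.exp (-x * b / (a + b))) :
    ∑ j ∈ Finset.range (⌊a⌋₊ + 1), φ (j : ℝ) ≤
      Real.exp 1 * (∫ x in (0:ℝ)..a, φ x) + φ 0 := by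
  have hc : 0 < a + b := by linarith
  set K := 6 / (a + b + 6) / (a + b + 5) ^ 5
  set μ := b / (a + b)
  have hK : 0 ≤ K := div_nonneg (div_nonneg (by norm_num) (by linarith)) (by positivity)
  have hμ : 0 ≤ μ := div_nonneg (by linarith) hc.le
  have hφ_eq : ∀ x, φ x = K * (x + (5 : ℕ)) ^ 5 * Real.exp (-(μ * x)) := by
    intro x
    rw [hφ, div_pow, show -x * b / (a + b) = -(μ * x) by ring]
    simp only [K]
    push_cast
    ring
  have hφ_cont : Continuous φ := by
    rw [funext hφ]
    fun_prop
  have hφ_nonneg : ∀ x, 0 ≤ x → 0 ≤ φ x := fun x hx => by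
    rw [hφ_eq]
    positivity
  have hstep : ∀ (i : ℕ) (x : ℝ), (i : ℝ) ≤ x → x ≤ i + 1 → φ (i + 1) ≤ Real.exp 1 * φ x := by
    intro i x hix hxi
    rw [hφ_eq, hφ_eq]
    exact mul_pow_mul_exp_le_exp_one_mul hK hμ (by norm_num) (by linarith [i.cast_nonneg (α := ℝ)])
      hxi (by linarith)
  have hsum := sum_range_floor_le_integral ha ((hφ_cont.const_mul _).intervalIntegrable _ _)
    (fun x hx => mul_nonneg (Real.exp_nonneg 1) (hφ_nonneg x hx.1)) hstep
  rw [intervalIntegral.integral_const_mul] at hsum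
  rw [sum_range_succ']
  push_cast
  linarith
end
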